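/- arXiv:1605.09302 — 2 statements merged into one kernel-verified Lean document; each statement's English description precedes it below -/
import Mathlib

section
/- Let n ≥ 2 and 1 ≤ r < n be integers. A homeomorphism h of 𝔠_{n,r} is pointwise canonical if and only if it belongs to H_{n,r,∼} and is densely canonical; that is, G_{n,r,pcn} = H_{n,r,∼} ∩ G_{n,r,dcn}. -/
/-!
Both directions rest on tail equivalence being an equivalence relation.

A pointwise canonical `h` moves every point within its tail class, so it preserves `∼`. It is
densely canonical by the Baire category theorem: the space is covered by the countably many closed
sets on which `h` carries the tail of a point from offset `a` to offset `b`, so one of them has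
interior inside any nonempty open `U`; a cone in that interior, small enough that its image lies
in a single cone, is one on which `h` acts canonically.

Conversely, one canonical cone `U_η` suffices: for `x = (c, u)` we have
`x ∼ η⌢u ∼ h(η⌢u) ∼ h(x)`, the last step because `h` preserves `∼`.
-/

open Set

namespace HigmanAut

/-- The one-sided infinite sequence space `𝔠_n` on `n` letters. -/
abbrev Cn (n : ℕ) : Type := ℕ → Fin n

/-- The Cantor space `𝔠_{n,r} = Fin r × (ℕ → Fin n)` (with the product topology,
`Fin r` and `Fin n` discrete). -/
abbrev CNR (n r : ℕ) : Type := Fin r × Cn n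

/-- A word: a letter from `Fin r` together with a finite list over `Fin n`. -/
abbrev Word (n r : ℕ) : Type := Fin r × List (Fin n)

/-- Self-homeomorphisms of `𝔠_{n,r}`. -/
abbrev Homeo (n r : ℕ) : Type := CNR n r ≃ₜ CNR n r

/-- Append a finite list to a word: `ν⌢w`. -/
def wApp {n r : ℕ} (ν : Word n r) (w : List (Fin n)) : Word n r := (ν.1, ν.2 ++ w)

/-- The point `ν⌢x` of `𝔠_{n,r}` determined by a word `ν` followed by `x ∈ 𝔠_n`. -/
def wCat {n r : ℕ} (ν : Word n r) (x : Cn n) : CNR n r :=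
  (ν.1, fun i => if h : i < ν.2.length then ν.2.get ⟨i, h⟩ else x (i - ν.2.length))

/-- The cone `U_ν` of a word `ν`. -/
def cone {n r : ℕ} (ν : Word n r) : Set (CNR n r) :=
  {p | p.1 = ν.1 ∧ ∀ (i : ℕ) (h : i < ν.2.length), p.2 i = ν.2.get ⟨i, h⟩}

/-- Membership in the Higman--Thompson group `G_{n,r}`: `g` is a prefix code map,
i.e. there are `k ≥ 1` and words `ν i`, `η i` whose cones partition `𝔠_{n,r}`
with `g(ν i ⌢ x) = η i ⌢ x` for all `i`, `x`. -/
def IsHigman {n r : ℕ} (g : Homeo n r) : Prop :=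
  ∃ k : ℕ, 0 < k ∧ ∃ ν η : Fin k → Word n r,
    (∀ p : CNR n r, ∃! i : Fin k, p ∈ cone (ν i)) ∧
    (∀ p : CNR n r, ∃! i : Fin k, p ∈ cone (η i)) ∧
    (∀ (i : Fin k) (x : Cn n), g (wCat (ν i) x) = wCat (η i) x)

/-- The Higman--Thompson group `G_{n,r}` as a set of homeomorphisms. -/
def higmanSet (n r : ℕ) : Set (Homeo n r) := {g | IsHigman g}

/-- Conjugation: in the paper's right-action notation this is `g ↦ h⁻¹ g h`
(as a left function, `x ↦ h (g (h⁻¹ x))`). -/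
def conjH {n r : ℕ} (h g : Homeo n r) : Homeo n r := (h.symm.trans g).trans h

/-- `h` acts in the same fashion on `U_α` and `U_β`: there are words `α'`, `β'`
and a common local action `f` with `h(α⌢x) = α'⌢f(x)` and `h(β⌢x) = β'⌢f(x)`. -/
def SameFashion {n r : ℕ} (h : Homeo n r) (α β : Word n r) : Prop :=
  ∃ (α' β' : Word n r) (f : Cn n → Cn n),
    (∀ x : Cn n, h (wCat α x) = wCat α' (f x)) ∧
    (∀ x : Cn n, h (wCat β x) = wCat β' (f x))

/-- Tail equivalence on `𝔠_{n,r}`. -/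
def TailEq {n r : ℕ} (x y : CNR n r) : Prop :=
  ∃ (ν η : Word n r) (z : Cn n), x = wCat ν z ∧ y = wCat η z

/-- `h` is pointwise canonical. -/
def PtwiseCanonical {n r : ℕ} (h : Homeo n r) : Prop :=
  ∀ x : CNR n r, ∃ (η₁ η₂ : Word n r) (y : Cn n), x = wCat η₁ y ∧ h x = wCat η₂ y

/-- `h` is densely canonical. -/
def DenselyCanonical {n r : ℕ} (h : Homeo n r) : Prop :=
  ∀ U : Set (CNR n r), IsOpen U → U.Nonempty →
    ∃ η ζ : Word n r, cone η ⊆ U ∧ ∀ x : Cn n, h (wCat η x) = wCat ζ x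

/-- `h` belongs to `H_{n,r,∼}`: `x ∼ y` iff `h(x) ∼ h(y)`. -/
def PreservesTailEq {n r : ℕ} (h : Homeo n r) : Prop :=
  ∀ x y : CNR n r, TailEq x y ↔ TailEq (h x) (h y)

/-- `ν` is a prefix of `η`, i.e. `U_η ⊆ U_ν`. -/
def WPrefix {n r : ℕ} (ν η : Word n r) : Prop := cone η ⊆ cone ν

/-- Two words are incomparable if neither is a prefix of the other. -/
def Incomp {n r : ℕ} (ν η : Word n r) : Prop := ¬ WPrefix ν η ∧ ¬ WPrefix η ν

open Filter Topology PiNat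

section

variable {n r : ℕ}

theorem wCat_snd_of_lt (ν : Word n r) (x : Cn n) {i : ℕ} (hi : i < ν.2.length) :
    (wCat ν x).2 i = ν.2[i] := by
  simp [wCat, hi]

theorem wCat_snd_length_add (ν : Word n r) (x : Cn n) (i : ℕ) :
    (wCat ν x).2 (ν.2.length + i) = x i := by
  simp [wCat]

theorem wCat_nil (p : CNR n r) : wCat (p.1, []) p.2 = p := by
  ext <;> simp [wCat]

theorem wCat_mem_cone (ν : Word n r) (x : Cn n) : wCat ν x ∈ cone ν :=
  ⟨rfl, fun _ hi => wCat_snd_of_lt ν x hi⟩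

theorem eq_wCat_of_mem_cone {ν : Word n r} {p : CNR n r} (hp : p ∈ cone ν) :
    p = wCat ν (fun i => p.2 (ν.2.length + i)) := by
  refine Prod.ext hp.1 (funext fun j => ?_)
  rcases lt_or_ge j ν.2.length with hj | hj
  · rw [wCat_snd_of_lt _ _ hj, hp.2 j hj, List.get_eq_getElem]
  · obtain ⟨k, rfl⟩ := Nat.exists_eq_add_of_le hj
    rw [wCat_snd_length_add]

theorem wCat_wApp (ν : Word n r) (w : List (Fin n)) (x : Cn n) :
    wCat (wApp ν w) x = wCat ν (wCat (ν.1, w) x).2 := by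
  refine Prod.ext rfl (funext fun j => ?_)
  simp only [wCat, wApp, List.length_append, List.get_eq_getElem, List.getElem_append]
  split_ifs <;> first | rfl | omega | (congr 1; omega)

theorem wCat_snd_add_of_le (ν : Word n r) (x : Cn n) {a : ℕ} (ha : a ≤ ν.2.length) (i : ℕ) :
    (wCat ν x).2 (a + i) = (wCat (ν.1, ν.2.drop a) x).2 i := by
  simp only [wCat, List.length_drop, List.get_eq_getElem, List.getElem_drop]
  split_ifs <;> first | rfl | omega | (congr 1; omega)

def prefixWord (p : CNR n r) (m : ℕ) : Word n r := (p.1, List.ofFn fun i : Fin m => p.2 i)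

@[simp]
theorem prefixWord_length (p : CNR n r) (m : ℕ) : (prefixWord p m).2.length = m :=
  List.length_ofFn

theorem cone_prefixWord (p : CNR n r) (m : ℕ) :
    cone (prefixWord p m) = {p.1} ×ˢ cylinder p.2 m := by
  ext q
  simp [cone, prefixWord, mem_cylinder_iff]

theorem mem_cone_prefixWord (p : CNR n r) (m : ℕ) : p ∈ cone (prefixWord p m) := by
  simp [cone_prefixWord]

theorem isOpen_cone_prefixWord (p : CNR n r) (m : ℕ) : IsOpen (cone (prefixWord p m)) := by
  rw [cone_prefixWord]
  exact (isOpen_discrete _).prod (isOpen_cylinder _ _ _)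

theorem eventually_cone_prefixWord_subset {p : CNR n r} {V : Set (CNR n r)} (hV : V ∈ 𝓝 p) :
    ∀ᶠ m in atTop, cone (prefixWord p m) ⊆ V := by
  rw [nhds_prod_eq, nhds_discrete, mem_prod_iff] at hV
  obtain ⟨s, hs, t, ht, hst⟩ := hV
  obtain ⟨-, ⟨y, m, rfl⟩, hy, hsub⟩ := (isTopologicalBasis_cylinders _).mem_nhds_iff.1 ht
  rw [mem_cylinder_iff_eq] at hy
  filter_upwards [eventually_ge_atTop m] with k hk
  rw [cone_prefixWord]
  exact (prod_mono (singleton_subset_iff.2 (mem_pure.1 hs))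
    ((cylinder_anti _ hk).trans (hy ▸ hsub))).trans hst

theorem tailEq_iff {x y : CNR n r} :
    TailEq x y ↔ ∃ a b : ℕ, ∀ i, x.2 (a + i) = y.2 (b + i) := by
  constructor
  · rintro ⟨ν, η, z, rfl, rfl⟩
    exact ⟨ν.2.length, η.2.length, fun i => by rw [wCat_snd_length_add, wCat_snd_length_add]⟩
  · rintro ⟨a, b, hab⟩
    refine ⟨prefixWord x a, prefixWord y b, fun i => x.2 (a + i), ?_, ?_⟩
    · simpa using eq_wCat_of_mem_cone (mem_cone_prefixWord x a)
    · simpa [hab] using eq_wCat_of_mem_cone (mem_cone_prefixWord y b)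

theorem TailEq.symm {x y : CNR n r} (h : TailEq x y) : TailEq y x :=
  let ⟨ν, η, z, hx, hy⟩ := h
  ⟨η, ν, z, hy, hx⟩

theorem TailEq.trans {x y w : CNR n r} (hxy : TailEq x y) (hyw : TailEq y w) : TailEq x w := by
  obtain ⟨a, b, hab⟩ := tailEq_iff.1 hxy
  obtain ⟨c, d, hcd⟩ := tailEq_iff.1 hyw
  refine tailEq_iff.2 ⟨a + c, d + b, fun i => ?_⟩
  calc x.2 (a + c + i) = y.2 (c + (b + i)) := by rw [add_assoc, hab, add_left_comm]
    _ = w.2 (d + b + i) := by rw [hcd, add_assoc]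

variable {h : Homeo n r}

theorem preservesTailEq_of_forall_tailEq (hh : ∀ x, TailEq x (h x)) : PreservesTailEq h :=
  fun x y => ⟨fun hxy => ((hh x).symm.trans hxy).trans (hh y),
    fun hxy => ((hh x).trans hxy).trans (hh y).symm⟩

theorem PreservesTailEq.ptwiseCanonical (hT : PreservesTailEq h) (hD : DenselyCanonical h) :
    PtwiseCanonical h := by
  intro x
  obtain ⟨η, ζ, -, hcan⟩ := hD univ isOpen_univ ⟨x, trivial⟩
  have hx : TailEq x (wCat η x.2) := ⟨(x.1, []), η, x.2, (wCat_nil x).symm, rfl⟩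
  exact (hx.trans ⟨η, ζ, x.2, rfl, hcan x.2⟩).trans ((hT _ _).1 hx).symm

def tailSet (h : Homeo n r) (a b : ℕ) : Set (CNR n r) :=
  {p | ∀ i, (h p).2 (b + i) = p.2 (a + i)}

theorem isClosed_tailSet (a b : ℕ) : IsClosed (tailSet h a b) := by
  simp only [tailSet, ofPred_forall]
  exact isClosed_iInter fun i => isClosed_eq (by fun_prop) (by fun_prop)

theorem dense_iUnion_interior_tailSet (hp : PtwiseCanonical h) :
    Dense (⋃ ab : ℕ × ℕ, interior (tailSet h ab.1 ab.2)) := by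
  refine dense_iUnion_interior_of_closed (fun ab => isClosed_tailSet ab.1 ab.2) ?_
  refine eq_univ_of_forall fun p => mem_iUnion.2 ?_
  obtain ⟨a, b, hab⟩ := tailEq_iff.1 (hp p)
  exact ⟨(a, b), fun i => (hab i).symm⟩

theorem apply_wCat_eq_of_mapsTo {η β : Word n r} {a : ℕ} (ha : a ≤ η.2.length)
    (hη : cone η ⊆ tailSet h a β.2.length) (hβ : MapsTo h (cone η) (cone β)) (x : Cn n) :
    h (wCat η x) = wCat (wApp β (η.2.drop a)) x := by
  have hq := wCat_mem_cone η x
  calc h (wCat η x) = wCat β (fun i => (h (wCat η x)).2 (β.2.length + i)) :=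
        eq_wCat_of_mem_cone (hβ hq)
    _ = wCat β (fun i => (wCat η x).2 (a + i)) := by simp only [hη hq _]
    _ = wCat β (wCat (η.1, η.2.drop a) x).2 := by simp only [wCat_snd_add_of_le η x ha]
    _ = wCat (wApp β (η.2.drop a)) x := (wCat_wApp _ _ _).symm

theorem PtwiseCanonical.denselyCanonical (hp : PtwiseCanonical h) : DenselyCanonical h := by
  intro U hU hne
  obtain ⟨p₀, hp₀, hU₀⟩ := (dense_iUnion_interior_tailSet hp).exists_mem_open hU hne
  obtain ⟨⟨a, b⟩, hab⟩ := mem_iUnion.1 hp₀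
  have hV : U ∩ interior (tailSet h a b) ∩ h ⁻¹' cone (prefixWord (h p₀) b) ∈ 𝓝 p₀ :=
    inter_mem (inter_mem (hU.mem_nhds hU₀) (isOpen_interior.mem_nhds hab))
      (h.continuous.continuousAt.preimage_mem_nhds
        ((isOpen_cone_prefixWord _ _).mem_nhds (mem_cone_prefixWord _ _)))
  obtain ⟨L, hsub, hL⟩ :=
    ((eventually_cone_prefixWord_subset hV).and (eventually_ge_atTop a)).exists
  refine ⟨prefixWord p₀ L, _, fun q hq => (hsub hq).1.1,
    apply_wCat_eq_of_mapsTo (a := a) (by rwa [prefixWord_length]) ?_ fun q hq => (hsub hq).2⟩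
  rw [prefixWord_length]
  exact fun q hq => interior_subset (hsub hq).1.2

end

theorem pcn_eq_Hsim_inter_dcn_general (n r : ℕ) (h : Homeo n r) :
    PtwiseCanonical h ↔ PreservesTailEq h ∧ DenselyCanonical h :=
  ⟨fun hp => ⟨preservesTailEq_of_forall_tailEq hp, hp.denselyCanonical⟩,
    fun ⟨hT, hD⟩ => hT.ptwiseCanonical hD⟩

/-- `G_{n,r,pcn} = H_{n,r,∼} ∩ G_{n,r,dcn}`. -/
theorem pcn_eq_Hsim_inter_dcn (n r : ℕ) (hn : 2 ≤ n) (hr1 : 1 ≤ r) (hrn : r < n)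
    (h : Homeo n r) :
    PtwiseCanonical h ↔ PreservesTailEq h ∧ DenselyCanonical h :=
  pcn_eq_Hsim_inter_dcn_general n r h

end HigmanAut
end

section
/- Let n ≥ 2 and 1 ≤ r < n be integers, let h be a homeomorphism of 𝔠_{n,r}, and let ν be a word such that for every letter l ∈ Fin n, h acts in the same fashion on U_ν and U_{ν⌢[l]}. Then the local action of h at ν is an iterated permutation: there exist a permutation σ of Fin n, c ∈ Fin r, and u ∈ List (Fin n) such that h(ν⌢x) = (c, u followed by σ ∘ x) for every x ∈ 𝔠_n. -/
open Set

/-! Write `h (ν⌢x) = (c, u)⌢f(x)` with `u` the longest common prefix of the images, so that the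
first letter of `f x` is not constant. Comparing with `h (ν⌢l⌢x)` then gives `f (l x) = p_l f(x)`
for words `p_l`, nonempty because `f` is injective. The image `F` of `f` is compact and open, hence
determined by its first `M` letters, and it is the disjoint union of the sets `p_l F`; counting the
prefixes of `F` of length `M + K` gives `n ^ K = ∑ l, n ^ (K - |p_l|)`, which forces `|p_l| = 1`.
So `f (l x) = σ(l) f(x)`, i.e. `f` applies a permutation `σ` letter by letter. -/

open Function

theorem Nat.eq_one_of_pow_eq_sum_pow_sub {ι : Type*} [Fintype ι] (hι : 1 < Fintype.card ι)
    {k : ι → ℕ} {K : ℕ} (hk : ∀ i, 1 ≤ k i) (hK : ∀ i, k i ≤ K)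
    (h : Fintype.card ι ^ K = ∑ i, Fintype.card ι ^ (K - k i)) (i : ι) : k i = 1 := by
  by_contra hi
  have hlt : ∑ j, Fintype.card ι ^ (K - k j) < ∑ _j : ι, Fintype.card ι ^ (K - 1) :=
    Finset.sum_lt_sum (fun j _ => Nat.pow_le_pow_right (by omega) (by have := hk j; omega))
      ⟨i, Finset.mem_univ i, Nat.pow_lt_pow_right hι (by have := hk i; have := hK i; omega)⟩
  rw [Finset.sum_const, Finset.card_univ, smul_eq_mul, ← _root_.pow_succ',
    Nat.sub_add_cancel ((hk i).trans (hK i))] at hlt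
  omega

namespace Stream'

variable {α β : Type*}

theorem take_eq_take_iff {z z' : Stream' α} {M : ℕ} :
    take M z' = take M z ↔ ∀ i < M, z'.get i = z.get i := by
  refine ⟨fun h i hi => ?_, fun h => List.ext_getElem? fun i => ?_⟩
  · simpa only [getElem?_take hi, Option.some_inj] using congrArg (·[i]?) h
  · rcases lt_or_ge i M with hi | hi
    · rw [getElem?_take hi, getElem?_take hi, h i hi]
    · rw [List.getElem?_eq_none (by simpa using hi), List.getElem?_eq_none (by simpa using hi)]

theorem range_append (u : List α) : range (u ++ₛ ·) = {z : Stream' α | take u.length z = u} := by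
  ext z
  refine ⟨?_, fun hz => ⟨drop u.length z, by conv_rhs => rw [← append_take_drop u.length z, hz]⟩⟩
  rintro ⟨z, rfl⟩
  exact (take_append_of_le_length _ _ _ le_rfl).trans List.take_length

theorem exists_forall_eq_append_of_ne {X : Type*} {s : X → Stream' α} (hs : ∃ x y, s x ≠ s y) :
    ∃ (u : List α) (f : X → Stream' α),
      (∀ x, s x = u ++ₛ f x) ∧ ∃ x y, (f x).head ≠ (f y).head := by
  classical
  have hex : ∃ N, ∃ x y, (s x).get N ≠ (s y).get N := by
    obtain ⟨x, y, hxy⟩ := hs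
    by_contra! h
    exact hxy (Stream'.ext fun N => h N x y)
  obtain ⟨x₀, y₀, hN⟩ := Nat.find_spec hex
  refine ⟨(s x₀).take (Nat.find hex), fun x => (s x).drop (Nat.find hex), fun x => ?_,
    x₀, y₀, by simpa only [head_drop] using hN⟩
  have hpre : (s x).take (Nat.find hex) = (s x₀).take (Nat.find hex) := by
    refine List.ext_getElem (by simp) fun i hi _ => ?_
    simp only [take_get]
    by_contra hne
    exact Nat.find_min hex (by simpa using hi) ⟨x, x₀, hne⟩
  rw [← hpre, append_take_drop]

theorem eq_drop_append_of_append_eq {X : Type*} {f t : X → Stream' α} {a u : List α}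
    (hf : ∃ x y, (f x).head ≠ (f y).head) (h : ∀ x, a ++ₛ t x = u ++ₛ f x) :
    ∀ x, t x = u.drop a.length ++ₛ f x := by
  have hlen : a.length ≤ u.length := by
    by_contra! hlt
    obtain ⟨x, y, hxy⟩ := hf
    have hget : ∀ x, (f x).head = a[u.length] := fun x => by
      rw [← get_append_left _ _ _ hlt, h x, get_append_length]
    exact hxy ((hget x).trans (hget y).symm)
  intro x
  simpa only [drop_append_stream, drop_append_of_le_length _ _ _ hlen]
    using congrArg (drop a.length) (h x)

section Substitution

variable {f : Stream' α → Stream' β} {p : α → List β}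

theorem iUnion_image_append_range (hp : ∀ a x, f (a :: x) = p a ++ₛ f x) :
    ⋃ a, (p a ++ₛ ·) '' range f = range f := by
  refine Subset.antisymm (iUnion_subset fun a => ?_) fun _ ⟨x, hx⟩ => mem_iUnion.2 ?_
  · rintro _ ⟨_, ⟨x, rfl⟩, rfl⟩
    exact ⟨a :: x, hp a x⟩
  · exact ⟨x.head, f x.tail, ⟨x.tail, rfl⟩, by rw [← hx, ← Stream'.eta x, hp]; rfl⟩

theorem pairwise_disjoint_image_append_range (hf : Injective f)
    (hp : ∀ a x, f (a :: x) = p a ++ₛ f x) :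
    Pairwise (Disjoint on fun a => (p a ++ₛ ·) '' range f) := by
  intro a b hab
  rw [onFun, Set.disjoint_left]
  rintro _ ⟨_, ⟨x, rfl⟩, rfl⟩ ⟨_, ⟨y, rfl⟩, hxy⟩
  simp only [← hp] at hxy
  exact hab (congrArg head (hf hxy)).symm

theorem ne_nil_of_injective [Nontrivial α] (hf : Injective f)
    (hp : ∀ a x, f (a :: x) = p a ++ₛ f x) (a : α) : p a ≠ [] := by
  intro hnil
  obtain ⟨b, hba⟩ := exists_ne a
  have := hf ((hp a (const b)).trans (by rw [hnil, nil_append_stream]))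
  exact hba.symm (congrArg head this)

theorem eq_map_of_forall_cons_eq {σ : α → β} (hp : ∀ a x, f (a :: x) = σ a :: f x)
    (x : Stream' α) : f x = x.map σ := by
  ext i
  induction i generalizing x with
  | zero => rw [← Stream'.eta x, hp]; rfl
  | succ i ih => rw [← Stream'.eta x, hp]; exact ih x.tail

theorem injective_of_forall_cons_eq {σ : α → β} (hf : Injective f)
    (hp : ∀ a x, f (a :: x) = σ a :: f x) : Injective σ := fun a b hab =>
  congrArg head (hf ((hp a (const a)).trans ((congrArg (· :: f (const a)) hab).trans
    (hp b (const a)).symm)))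

end Substitution

def DeterminedAt (F : Set (Stream' α)) (M : ℕ) : Prop :=
  ∀ z ∈ F, ∀ z', z'.take M = z.take M → z' ∈ F

theorem isOpen_setOf_take_eq [TopologicalSpace α] [DiscreteTopology α] (L : ℕ) (w : List α) :
    IsOpen {z : ℕ → α | take L z = w} :=
  isOpen_iff_forall_mem_open.2 fun z hz => ⟨PiNat.cylinder z L,
    fun _ hz' => (take_eq_take_iff.2 (PiNat.mem_cylinder_iff.1 hz')).trans hz,
    PiNat.isOpen_cylinder _ z L, PiNat.self_mem_cylinder z L⟩

theorem _root_.IsCompact.exists_determinedAt [TopologicalSpace α] [DiscreteTopology α]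
    {F : Set (ℕ → α)} (hc : IsCompact F) (ho : IsOpen F) : ∃ M, DeterminedAt F M := by
  let U : ℕ → Set (ℕ → α) := fun M => {z | PiNat.cylinder z M ⊆ F}
  have hUo : ∀ M, IsOpen (U M) := fun M => isOpen_iff_forall_mem_open.2 fun z hz =>
    ⟨PiNat.cylinder z M, fun z' hz' => by simpa [U, PiNat.mem_cylinder_iff_eq.1 hz'] using hz,
      PiNat.isOpen_cylinder _ z M, PiNat.self_mem_cylinder z M⟩
  have hFU : F ⊆ ⋃ M, U M := fun z hz => by
    obtain ⟨_, ⟨x, M, rfl⟩, hzx, hxF⟩ :=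
      (PiNat.isTopologicalBasis_cylinders _).isOpen_iff.1 ho z hz
    exact mem_iUnion.2 ⟨M, by simpa [U, PiNat.mem_cylinder_iff_eq.1 hzx] using hxF⟩
  have hmono : Monotone U := fun M L hML z hz => (PiNat.cylinder_anti z hML).trans hz
  obtain ⟨M, hM⟩ := hc.elim_directed_cover U hUo hFU hmono.directed_le
  exact ⟨M, fun z hz z' hz' => hM hz (PiNat.mem_cylinder_iff.2 (take_eq_take_iff.1 hz'))⟩

theorem finite_image_take [Finite α] (F : Set (Stream' α)) (L : ℕ) : (take L '' F).Finite :=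
  (List.finite_length_eq α L).subset (image_subset_iff.2 fun z _ => length_take L z)

theorem image_take_image_append (F : Set (Stream' α)) (p : List α) (L : ℕ) :
    take (p.length + L) '' ((p ++ₛ ·) '' F) = (p ++ ·) '' (take L '' F) := by
  simp only [image_image, append_take]

namespace DeterminedAt

variable {F A B : Set (Stream' α)} {M L : ℕ}

theorem mono (hF : DeterminedAt F M) (h : M ≤ L) : DeterminedAt F L := fun z hz z' hz' =>
  hF z hz z' (by rw [← min_eq_right h, ← take_take, hz', take_take])

theorem image_append (hF : DeterminedAt F M) (p : List α) :
    DeterminedAt ((p ++ₛ ·) '' F) (p.length + M) := by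
  rintro _ ⟨s, hs, rfl⟩ z' hz'
  rw [take_add, take_add, take_append_of_le_length _ _ _ le_rfl, List.take_length,
    drop_append_stream] at hz'
  obtain ⟨hp, hM⟩ := List.append_inj hz' (by simp)
  exact ⟨_, hF s hs _ hM, by have := append_take_drop p.length z'; rwa [hp] at this⟩

theorem disjoint_image_take (hA : DeterminedAt A L) (h : Disjoint A B) :
    Disjoint (take L '' A) (take L '' B) := by
  rw [Set.disjoint_left]
  rintro _ ⟨z, hz, rfl⟩ ⟨z', hz', hzz'⟩
  exact h.notMem_of_mem_left (hA z hz z' hzz') hz'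

theorem image_take_succ (hF : DeterminedAt F M) (hL : M ≤ L) :
    take (L + 1) '' F = (fun w : List α × α => w.1 ++ [w.2]) '' ((take L '' F) ×ˢ univ) := by
  ext w
  constructor
  · rintro ⟨z, hz, rfl⟩
    exact ⟨(take L z, z.get L), ⟨mem_image_of_mem _ hz, mem_univ _⟩, (take_succ' L).symm⟩
  · rintro ⟨⟨_, a⟩, ⟨⟨z, hz, rfl⟩, -⟩, rfl⟩
    refine ⟨(take L z ++ [a]) ++ₛ z, (hF.mono hL) z hz _ ?_, ?_⟩
    · rw [take_append_of_le_length _ _ _ (by simp), List.take_append_of_le_length (by simp),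
        List.take_of_length_le (by simp)]
    · rw [take_append_of_le_length _ _ _ (by simp), List.take_of_length_le (by simp)]

theorem ncard_image_take_add [Fintype α] (hF : DeterminedAt F M) (t : ℕ) :
    (take (M + t) '' F).ncard = (take M '' F).ncard * Fintype.card α ^ t := by
  induction t with
  | zero => simp
  | succ t ih =>
    have hinj : Injective fun w : List α × α => w.1 ++ [w.2] := fun v w h =>
      Prod.ext (List.append_inj' h rfl).1 (by simpa using (List.append_inj' h rfl).2)
    rw [← add_assoc, hF.image_take_succ (by omega), ncard_image_of_injective _ hinj, ncard_prod,
      ncard_univ, Nat.card_eq_fintype_card, ih, pow_succ, mul_assoc]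

theorem length_eq_one_of_partition [Fintype α] [Nontrivial α] (hF : DeterminedAt F M)
    (hne : F.Nonempty) {p : α → List α} (hp : ∀ a, p a ≠ [])
    (hcover : ⋃ a, (p a ++ₛ ·) '' F = F) (hdisj : Pairwise (Disjoint on fun a => (p a ++ₛ ·) '' F))
    (a : α) : (p a).length = 1 := by
  classical
  set K := Finset.univ.sup fun a => (p a).length
  have hK : ∀ a, (p a).length ≤ K := fun a =>
    Finset.le_sup (f := fun a => (p a).length) (Finset.mem_univ a)
  have hpiece : ∀ a, (take (M + K) '' ((p a ++ₛ ·) '' F)).ncard =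
      (take M '' F).ncard * Fintype.card α ^ (K - (p a).length) := fun a => by
    rw [show M + K = (p a).length + (M + (K - (p a).length)) by have := hK a; omega,
      image_take_image_append, ncard_image_of_injective _ (List.append_right_injective _),
      hF.ncard_image_take_add]
  have hsum : (take (M + K) '' F).ncard = ∑ a, (take (M + K) '' ((p a ++ₛ ·) '' F)).ncard := by
    conv_lhs => rw [← hcover, image_iUnion]
    rw [ncard_iUnion_of_finite (fun a => finite_image_take _ _) fun a b hab =>
      ((hF.image_append (p a)).mono (by have := hK a; omega)).disjoint_image_take (hdisj hab),
      finsum_eq_sum_of_fintype]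
  have hpos : 0 < (take M '' F).ncard := (ncard_pos (finite_image_take F M)).2 (hne.image _)
  refine Nat.eq_one_of_pow_eq_sum_pow_sub Fintype.one_lt_card
    (fun a => List.length_pos_iff.2 (hp a)) hK (Nat.eq_of_mul_eq_mul_left hpos ?_) a
  rw [← hF.ncard_image_take_add, hsum, Finset.mul_sum]
  exact Finset.sum_congr rfl fun a _ => hpiece a

end DeterminedAt

end Stream'

namespace HigmanAut

open scoped Stream'

/- `Cn n` and `Stream' (Fin n)` agree only after unfolding `Stream'`, so `rw` and `simp` cannot use
stream lemmas on terms of type `Cn n`; the proofs below apply them as explicit terms instead. -/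

variable {n r : ℕ}

theorem wCat_eq (w : Word n r) (x : Cn n) : wCat w x = (w.1, w.2 ++ₛ x) := by
  refine Prod.ext rfl (Stream'.ext fun i => ?_)
  change (if h : i < w.2.length then w.2.get ⟨i, h⟩ else x (i - w.2.length)) = (w.2 ++ₛ x).get i
  split_ifs with hi
  · exact (Stream'.get_append_left i w.2 x hi).symm
  · obtain ⟨j, rfl⟩ := Nat.exists_eq_add_of_le (not_lt.1 hi)
    exact (congrArg x (Nat.add_sub_cancel_left ..)).trans (Stream'.get_append_right j w.2 x).symm

theorem wCat_injective (w : Word n r) : Injective (wCat w) := fun x y hxy => by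
  have := congrArg Prod.snd hxy
  rw [wCat_eq, wCat_eq] at this
  exact Stream'.append_right_injective _ _ _ this

theorem wCat_wApp_singleton (ν : Word n r) (l : Fin n) (x : Cn n) :
    wCat (wApp ν [l]) x = wCat ν (l :: x) :=
  (wCat_eq _ x).trans ((congrArg (Prod.mk ν.1) (Stream'.append_append_stream ν.2 [l] x)).trans
    (wCat_eq ν _).symm)

theorem continuous_wCat (w : Word n r) : Continuous (wCat w) :=
  continuous_const.prodMk <| continuous_pi fun i => by
    by_cases hi : i < w.2.length <;> simp only [hi, dif_pos, dif_neg, not_false_iff] <;> fun_prop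

theorem isOpen_range_wCat (w : Word n r) : IsOpen (range (wCat w)) := by
  have : range (wCat w) = {p : CNR n r | p.1 = w.1 ∧ Stream'.take w.2.length p.2 = w.2} := by
    ext ⟨c, z⟩
    constructor
    · rintro ⟨x, hx⟩
      rw [wCat_eq] at hx
      cases hx
      exact ⟨rfl, (Stream'.range_append w.2).subset (mem_range_self x)⟩
    · rintro ⟨rfl, hz⟩
      obtain ⟨x, rfl⟩ := (Stream'.range_append w.2).symm.subset hz
      exact ⟨x, wCat_eq w x⟩
  rw [this]
  exact ((isOpen_discrete {w.1}).preimage continuous_fst).inter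
    ((Stream'.isOpen_setOf_take_eq (α := Fin n) _ _).preimage continuous_snd)

variable {h : Homeo n r} {ν : Word n r}

theorem exists_local_action [Nontrivial (Fin n)] {c : Fin r} (hc : ∀ x, (h (wCat ν x)).1 = c) :
    ∃ (u : List (Fin n)) (f : Cn n → Cn n),
      (∀ x, h (wCat ν x) = wCat (c, u) (f x)) ∧ ∃ x y, f x 0 ≠ f y 0 := by
  obtain ⟨a, b, hab⟩ := exists_pair_ne (Fin n)
  have hs : ∃ x y : Cn n, (h (wCat ν x)).2 ≠ (h (wCat ν y)).2 := by
    refine ⟨fun _ => a, fun _ => b, fun hxy => hab ?_⟩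
    exact congrFun (wCat_injective ν (h.injective (Prod.ext ((hc _).trans (hc _).symm) hxy))) 0
  obtain ⟨u, f, hf, hhead⟩ := Stream'.exists_forall_eq_append_of_ne hs
  refine ⟨u, f, fun x => Prod.ext (hc x) ?_, hhead⟩
  exact (hf x).trans (congrArg Prod.snd (wCat_eq (c, u) (f x))).symm

variable {c : Fin r} {u : List (Fin n)} {f : Cn n → Cn n}

theorem injective_local_action (hf : ∀ x, h (wCat ν x) = wCat (c, u) (f x)) : Injective f :=
  fun x y hxy => wCat_injective ν (h.injective (by rw [hf, hf, hxy]))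

theorem continuous_local_action (hf : ∀ x, h (wCat ν x) = wCat (c, u) (f x)) : Continuous f := by
  have : f = fun x i => (h (wCat ν x)).2 (u.length + i) := funext fun x => funext fun i =>
    ((Stream'.get_append_right i u (f x)).symm.trans
      (congrArg (fun p : CNR n r => p.2 (u.length + i)) ((wCat_eq _ _).symm.trans (hf x).symm)))
  rw [this]
  exact continuous_pi fun i =>
    (continuous_apply _).comp (continuous_snd.comp (h.continuous.comp (continuous_wCat ν)))

theorem isOpen_range_local_action (hf : ∀ x, h (wCat ν x) = wCat (c, u) (f x)) :
    IsOpen (range f) := by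
  have : range f = wCat (c, u) ⁻¹' (h '' range (wCat ν)) := by
    ext z
    refine ⟨fun ⟨x, hx⟩ => ⟨wCat ν x, mem_range_self x, hx ▸ hf x⟩, ?_⟩
    rintro ⟨_, ⟨x, rfl⟩, hx⟩
    exact ⟨x, wCat_injective _ ((hf x).symm.trans hx)⟩
  rw [this]
  exact (h.isOpenMap _ (isOpen_range_wCat ν)).preimage (continuous_wCat _)

theorem exists_cons_eq_append_local_action {l : Fin n} (hsf : SameFashion h ν (wApp ν [l]))
    (hf : ∀ x, h (wCat ν x) = wCat (c, u) (f x)) (hhead : ∃ x y, f x 0 ≠ f y 0) :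
    ∃ p : List (Fin n), ∀ x, f (l :: x) = p ++ₛ f x := by
  obtain ⟨α', β', fl, hα, hβ⟩ := hsf
  have snd_eq : ∀ {w w' : Word n r} {x y : Cn n}, wCat w x = wCat w' y → w.2 ++ₛ x = w'.2 ++ₛ y :=
    fun hxy => congrArg Prod.snd ((wCat_eq _ _).symm.trans (hxy.trans (wCat_eq _ _)))
  have hfl := Stream'.eq_drop_append_of_append_eq hhead fun x => snd_eq ((hα x).symm.trans (hf x))
  refine ⟨_, Stream'.eq_drop_append_of_append_eq (a := u) (u := β'.2 ++ u.drop α'.2.length)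
    hhead fun x => ?_⟩
  calc u ++ₛ f (l :: x) = β'.2 ++ₛ fl x :=
        snd_eq ((hf _).symm.trans ((congrArg h (wCat_wApp_singleton ν l x)).symm.trans (hβ x)))
    _ = (β'.2 ++ u.drop α'.2.length) ++ₛ f x :=
        (congrArg (β'.2 ++ₛ ·) (hfl x)).trans (Stream'.append_append_stream _ _ _).symm

theorem same_fashion_on_children_iterated_permutation_general (n r : ℕ) (hn : 2 ≤ n)
    (h : Homeo n r) (ν : Word n r)
    (hsf : ∀ l : Fin n, SameFashion h ν (wApp ν [l])) :
    ∃ (σ : Equiv.Perm (Fin n)) (c : Fin r) (u : List (Fin n)),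
      ∀ x : Cn n, h (wCat ν x) = wCat (c, u) (fun i => σ (x i)) := by
  have : Nontrivial (Fin n) := Fin.nontrivial_iff_two_le.2 hn
  obtain ⟨c, hc⟩ : ∃ c, ∀ x, (h (wCat ν x)).1 = c := by
    obtain ⟨α', _, _, hα, -⟩ := hsf ⟨0, by omega⟩
    exact ⟨α'.1, fun x => congrArg Prod.fst ((hα x).trans (wCat_eq _ _))⟩
  obtain ⟨u, f, hf, hhead⟩ := exists_local_action hc
  have hinj := injective_local_action hf
  choose p hp using fun l => exists_cons_eq_append_local_action (hsf l) hf hhead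
  obtain ⟨M, hM⟩ := (isCompact_range (continuous_local_action hf)).exists_determinedAt
    (isOpen_range_local_action hf)
  have hlen := hM.length_eq_one_of_partition (range_nonempty f)
    (Stream'.ne_nil_of_injective hinj hp) (Stream'.iUnion_image_append_range hp)
    (Stream'.pairwise_disjoint_image_append_range hinj hp)
  choose σ hσ using fun l => List.length_eq_one_iff.1 (hlen l)
  have hσf : ∀ l x, f (l :: x) = σ l :: f x := fun l x => (hp l x).trans (by rw [hσ]; rfl)
  have hσinj := Stream'.injective_of_forall_cons_eq hinj hσf
  exact ⟨Equiv.ofBijective σ hσinj.bijective_of_finite, c, u,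
    fun x => (hf x).trans (congrArg _ (Stream'.eq_map_of_forall_cons_eq hσf x))⟩

/-- If `h` acts in the same fashion on `U_ν` and each child cone
`U_{ν⌢[l]}`, then the local action of `h` at `ν` is an iterated permutation. -/
theorem same_fashion_on_children_iterated_permutation (n r : ℕ) (hn : 2 ≤ n)
    (hr1 : 1 ≤ r) (hrn : r < n) (h : Homeo n r) (ν : Word n r)
    (hsf : ∀ l : Fin n, SameFashion h ν (wApp ν [l])) :
    ∃ (σ : Equiv.Perm (Fin n)) (c : Fin r) (u : List (Fin n)),
      ∀ x : Cn n, h (wCat ν x) = wCat (c, u) (fun i => σ (x i)) :=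
  same_fashion_on_children_iterated_permutation_general n r hn h ν hsf

end HigmanAut
end
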